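/- arXiv:1808.01069 — 3 statements merged into one kernel-verified Lean document; each statement's English description precedes it below -/
import Mathlib

section
/- Let C = {λ ∈ P : |(λ, α^∨)| ≤ m(α) for all α ∈ Φ}. Then every orbit of the affine Weyl group W ⋉ Q^m acting on P intersects C ∩ P^+ in exactly one point, where Q^m is the root lattice of Φ^m acting by translations. In particular, every W ⋉ P^m-orbit in P intersects C. -/
/-!
Existence is a descent. If a weight `w` violates `0 ≤ ⟨w, α^∨⟩ ≤ m(α)` for a positive root `α`,
then `s_α w` (in the second case followed by the translation by `m(α)α`) is strictly closer to a
fixed point `c` with `0 < ⟨c, α^∨⟩ < m(α)` for all `α > 0`, such as a small multiple of the sum of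
the positive roots; integrality and finiteness of `Φ` bound the gain from below.

Uniqueness is a second descent. Write `y = w x + ν` with `w ∈ W` and `ν ∈ Q^m`. If
`⟨ν, β^∨⟩ > m(β)` for some root `β`, the bounds on `x` and `y` and `⟨ν, β^∨⟩ ∈ m(β)ℤ` force
`⟨ν, β^∨⟩ = 2m(β)`, and then `y = s_β w x + (ν - m(β)β)` with `‖ν - m(β)β‖ < ‖ν‖`. Otherwise
`ν = 0`, since `Q^m` meets `C` only in `0`. Finally two dominant points in one `W`-orbit are equal,
by the classical argument with simple roots (the indecomposable positive roots) and the exchange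
property.
-/

open RealInnerProductSpace

lemma Set.Finite.exists_pos_forall_le {ι : Type*} {s : Set ι} (hs : s.Finite) {f : ι → ℝ}
    (hf : ∀ i ∈ s, 0 < f i) : ∃ δ > 0, ∀ i ∈ s, δ ≤ f i := by
  rcases s.eq_empty_or_nonempty with rfl | hne
  · exact ⟨1, one_pos, by simp⟩
  obtain ⟨i, hi, hmin⟩ := Set.exists_min_image s f hs hne
  exact ⟨f i, hf i hi, hmin⟩

theorem exists_reflTransGen_of_descent {X : Type*} {r : X → X → Prop} {p q : X → Prop}
    (φ : X → ℝ) (hφ : ∀ a, p a → 0 ≤ φ a) {δ : ℝ} (hδ : 0 < δ)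
    (hstep : ∀ a, p a → ¬q a → ∃ b, p b ∧ r a b ∧ φ b ≤ φ a - δ) {a : X} (ha : p a) :
    ∃ b, p b ∧ q b ∧ Relation.ReflTransGen r a b := by
  suffices key : ∀ n : ℕ, ∀ a, p a → φ a < n * δ → ∃ b, p b ∧ q b ∧ Relation.ReflTransGen r a b by
    obtain ⟨n, hn⟩ := exists_nat_gt (φ a / δ)
    exact key n a ha ((div_lt_iff₀ hδ).mp hn)
  intro n
  induction n with
  | zero => intro a ha hlt; simp at hlt; linarith [hφ a ha]
  | succ n ih =>
    intro a ha hlt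
    by_cases hq : q a
    · exact ⟨a, ha, hq, .refl⟩
    obtain ⟨b, hb, hab, hφb⟩ := hstep a ha hq
    obtain ⟨c, hc, hqc, hbc⟩ := ih b hb (by push_cast at hlt; linarith)
    exact ⟨c, hc, hqc, .head hab hbc⟩

namespace EuclideanRootSystem

variable {E : Type*} [NormedAddCommGroup E] [InnerProductSpace ℝ E]

noncomputable def pairing (v α : E) : ℝ := 2 * ⟪v, α⟫ / ⟪α, α⟫

lemma pairing_add (u v α : E) : pairing (u + v) α = pairing u α + pairing v α := by
  simp only [pairing, inner_add_left]; ring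

lemma pairing_smul (r : ℝ) (v α : E) : pairing (r • v) α = r * pairing v α := by
  simp only [pairing, real_inner_smul_left]; ring

lemma pairing_sub (u v α : E) : pairing (u - v) α = pairing u α - pairing v α := by
  simp only [pairing, inner_sub_left]; ring

lemma pairing_neg_right (v α : E) : pairing v (-α) = -pairing v α := by
  simp only [pairing, inner_neg_right, inner_neg_left, neg_neg]; ring

lemma pairing_self {α : E} (h : α ≠ 0) : pairing α α = 2 := by
  rw [pairing, mul_div_assoc, div_self (inner_self_ne_zero.mpr h), mul_one]

lemma pairing_mul_inner_self (v α : E) : pairing v α * ⟪α, α⟫ = 2 * ⟪v, α⟫ := by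
  rcases eq_or_ne α 0 with rfl | h
  · simp
  · exact div_mul_cancel₀ _ (inner_self_ne_zero.mpr h)

lemma pairing_pos_iff {v α : E} (h : α ≠ 0) : 0 < pairing v α ↔ 0 < ⟪v, α⟫ := by
  have := real_inner_self_pos.mpr h
  rw [pairing, div_pos_iff_of_pos_right this]
  constructor <;> intro <;> linarith

lemma pairing_mul_pairing (u v : E) :
    pairing u v * pairing v u = 4 * ⟪u, v⟫ ^ 2 / (⟪u, u⟫ * ⟪v, v⟫) := by
  simp only [pairing, real_inner_comm u v]
  ring

lemma exists_mem_inner_pos_of_inner_sum_pos {l : List E} {v : E} (h : 0 < ⟪l.sum, v⟫) :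
    ∃ γ ∈ l, 0 < ⟪γ, v⟫ := by
  induction l with
  | nil => simp at h
  | cons γ l ih =>
    rw [List.sum_cons, inner_add_left] at h
    by_cases hγ : 0 < ⟪γ, v⟫
    · exact ⟨γ, by simp, hγ⟩
    · obtain ⟨δ, hδ, hδv⟩ := ih (by linarith)
      exact ⟨δ, by simp [hδ], hδv⟩

lemma inner_sq_lt_of_not_parallel {u v : E} (hu : u ≠ 0) (hv : v ≠ 0)
    (h : ∀ r : ℝ, v ≠ r • u) : ⟪u, v⟫ ^ 2 < ⟪u, u⟫ * ⟪v, v⟫ := by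
  have hlt : |⟪u, v⟫| < ‖u‖ * ‖v‖ := by
    refine (abs_real_inner_le_norm u v).lt_of_ne fun heq => ?_
    obtain ⟨r, -, hr⟩ := (norm_inner_eq_norm_iff hu hv).mp (by rwa [Real.norm_eq_abs])
    exact h r hr
  rw [real_inner_self_eq_norm_sq, real_inner_self_eq_norm_sq, ← sq_abs]
  nlinarith [abs_nonneg ⟪u, v⟫]

lemma pairing_mul_pairing_lt_four {u v : E} (hu : u ≠ 0) (hv : v ≠ 0)
    (h : ∀ r : ℝ, v ≠ r • u) : pairing u v * pairing v u < 4 := by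
  have := inner_sq_lt_of_not_parallel hu hv h
  rw [pairing_mul_pairing, div_lt_iff₀ (mul_pos (real_inner_self_pos.mpr hu)
    (real_inner_self_pos.mpr hv))]
  linarith

noncomputable def rootReflection (α : E) : E →ₗ[ℝ] E where
  toFun v := v - pairing v α • α
  map_add' u v := by simp only [pairing_add, add_smul]; abel
  map_smul' r v := by simp only [pairing_smul, smul_sub, mul_smul, RingHom.id_apply]

lemma rootReflection_apply (α v : E) : rootReflection α v = v - pairing v α • α := rfl

lemma rootReflection_neg (α : E) : rootReflection (-α) = rootReflection α :=
  LinearMap.ext fun v => by simp [rootReflection_apply, pairing_neg_right]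

lemma rootReflection_self {α : E} (h : α ≠ 0) : rootReflection α α = -α := by
  rw [rootReflection_apply, pairing_self h]; module

lemma inner_rootReflection {α : E} (h : α ≠ 0) (u v : E) :
    ⟪rootReflection α u, rootReflection α v⟫ = ⟪u, v⟫ := by
  have : ⟪α, α⟫ ≠ 0 := inner_self_ne_zero.mpr h
  simp only [rootReflection_apply, pairing, inner_sub_left, inner_sub_right,
    real_inner_smul_left, real_inner_smul_right, real_inner_comm v α]
  field_simp
  ring

lemma rootReflection_rootReflection {α : E} (h : α ≠ 0) (v : E) :
    rootReflection α (rootReflection α v) = v := by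
  simp only [rootReflection_apply, pairing_sub, pairing_smul, pairing_self h]
  module

lemma pairing_rootReflection {α : E} (h : α ≠ 0) (u v : E) :
    pairing (rootReflection α u) (rootReflection α v) = pairing u v := by
  simp only [pairing, inner_rootReflection h]

lemma pairing_rootReflection_left {α : E} (h : α ≠ 0) (u v : E) :
    pairing (rootReflection α u) v = pairing u (rootReflection α v) := by
  conv_lhs => rw [← rootReflection_rootReflection h v]
  exact pairing_rootReflection h u _

noncomputable def act (l : List E) : E →ₗ[ℝ] E := (l.map rootReflection).prod

@[simp] lemma act_nil : act ([] : List E) = 1 := rfl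

@[simp] lemma act_cons (α : E) (l : List E) : act (α :: l) = rootReflection α * act l := by
  simp [act]

lemma act_append (l₁ l₂ : List E) : act (l₁ ++ l₂) = act l₁ * act l₂ := by
  simp [act]

lemma act_singleton (α : E) : act [α] = rootReflection α := by simp

end EuclideanRootSystem

structure EuclideanRootSystem (E : Type*) [NormedAddCommGroup E] [InnerProductSpace ℝ E] where
  roots : Set E
  pos : Set E
  finite : roots.Finite
  integral : ∀ α ∈ roots, ∀ β ∈ roots, ∃ z : ℤ, EuclideanRootSystem.pairing β α = z
  reflection_mem : ∀ α ∈ roots, ∀ β ∈ roots, β - EuclideanRootSystem.pairing β α • α ∈ roots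
  reduced : ∀ α ∈ roots, ∀ c : ℝ, c • α ∈ roots → c = 1 ∨ c = -1
  pos_subset : pos ⊆ roots
  mem_pos_iff : ∀ α ∈ roots, α ∈ pos ↔ -α ∉ pos
  add_mem_pos : ∀ α ∈ pos, ∀ β ∈ pos, α + β ∈ roots → α + β ∈ pos

namespace EuclideanRootSystem

variable {E : Type*} [NormedAddCommGroup E] [InnerProductSpace ℝ E] {R : EuclideanRootSystem E}
  {α β : E}

lemma zero_notMem (R : EuclideanRootSystem E) : (0 : E) ∉ R.roots := fun h => by
  have := R.reduced 0 h 0 (by simpa using h)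
  norm_num at this

lemma ne_zero_of_mem (h : α ∈ R.roots) : α ≠ 0 := by
  rintro rfl; exact R.zero_notMem h

lemma rootReflection_mem (hα : α ∈ R.roots) (hβ : β ∈ R.roots) : rootReflection α β ∈ R.roots :=
  R.reflection_mem α hα β hβ

lemma neg_mem (h : α ∈ R.roots) : -α ∈ R.roots := by
  simpa [rootReflection_self (ne_zero_of_mem h)] using rootReflection_mem h h

lemma mem_roots_of_mem_pos (h : α ∈ R.pos) : α ∈ R.roots := R.pos_subset h

lemma neg_notMem_pos (h : α ∈ R.pos) : -α ∉ R.pos :=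
  (R.mem_pos_iff α (mem_roots_of_mem_pos h)).mp h

lemma neg_mem_pos_of_notMem_pos (hα : α ∈ R.roots) (h : α ∉ R.pos) : -α ∈ R.pos :=
  not_not.mp fun hn => h ((R.mem_pos_iff α hα).mpr hn)

lemma exists_pairing_eq_int (hα : α ∈ R.roots) (hβ : β ∈ R.roots) : ∃ z : ℤ, pairing β α = z :=
  R.integral α hα β hβ

lemma ne_smul_of_mem (hα : α ∈ R.roots) (hβ : β ∈ R.roots) (h₁ : β ≠ α) (h₂ : β ≠ -α) :
    ∀ r : ℝ, β ≠ r • α := by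
  rintro r rfl
  rcases R.reduced α hα r hβ with rfl | rfl <;> simp_all

lemma sub_mem_of_inner_pos (hα : α ∈ R.roots) (hβ : β ∈ R.roots) (hpos : 0 < ⟪β, α⟫)
    (hne : β ≠ α) : β - α ∈ R.roots := by
  have hα0 := ne_zero_of_mem hα
  have hβ0 := ne_zero_of_mem hβ
  have hneg : β ≠ -α := by
    rintro rfl
    rw [inner_neg_left] at hpos
    linarith [real_inner_self_nonneg (x := α)]
  have hlt := pairing_mul_pairing_lt_four hα0 hβ0 (ne_smul_of_mem hα hβ hne hneg)
  obtain ⟨p, hp⟩ := exists_pairing_eq_int hα hβ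
  obtain ⟨q, hq⟩ := exists_pairing_eq_int hβ hα
  have hp1 : 1 ≤ p := by
    have : (0 : ℝ) < p := hp ▸ (pairing_pos_iff hα0).mpr hpos
    exact_mod_cast this
  have hq1 : 1 ≤ q := by
    have : (0 : ℝ) < q := hq ▸ (pairing_pos_iff hβ0).mpr (by rwa [real_inner_comm])
    exact_mod_cast this
  have hpq : p * q < 4 := by
    rw [hq, hp] at hlt
    have : ((p * q : ℤ) : ℝ) < 4 := by push_cast; linarith
    exact_mod_cast this
  have hone : p = 1 ∨ q = 1 := by
    by_contra! h
    have : 2 ≤ p := by omega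
    have : 2 ≤ q := by omega
    nlinarith
  rcases hone with h | h
  · simpa [rootReflection_apply, hp, h] using rootReflection_mem hα hβ
  · simpa [rootReflection_apply, hq, h] using neg_mem (rootReflection_mem hβ hα)

theorem list_sum_mem_pos (l : List E) (hl : ∀ γ ∈ l, γ ∈ R.pos) (h : l.sum ∈ R.roots) :
    l.sum ∈ R.pos := by
  obtain ⟨γ, hγl, hγ⟩ := exists_mem_inner_pos_of_inner_sum_pos
    (real_inner_self_pos.mpr (ne_zero_of_mem h))
  obtain ⟨s, t, rfl⟩ := List.append_of_mem hγl
  have hγ₀ : γ ∈ R.pos := hl γ hγl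
  have hsplit : γ + (s ++ t).sum = (s ++ γ :: t).sum := by simp; abel
  rcases eq_or_ne (s ++ γ :: t).sum γ with heq | hne
  · rw [heq]; exact hγ₀
  have hrest : (s ++ t).sum ∈ R.pos := by
    refine list_sum_mem_pos (s ++ t) (fun δ hδ => hl δ (by simp at hδ ⊢; tauto)) ?_
    rw [eq_sub_of_add_eq' hsplit]
    exact sub_mem_of_inner_pos (mem_roots_of_mem_pos hγ₀) h
      (by rwa [real_inner_comm]) hne
  rw [← hsplit] at h ⊢
  exact R.add_mem_pos γ hγ₀ _ hrest h
termination_by l.length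
decreasing_by subst_vars; simp

lemma list_sum_ne_zero {l : List E} (hl : ∀ γ ∈ l, γ ∈ R.pos) (hne : l ≠ []) : l.sum ≠ 0 := by
  obtain ⟨γ, t, rfl⟩ := List.exists_cons_of_ne_nil hne
  intro h
  have hγ : γ ∈ R.pos := hl γ (by simp)
  have ht : t.sum = -γ := eq_neg_of_add_eq_zero_right (by simpa using h)
  have := list_sum_mem_pos t (fun δ hδ => hl δ (by simp [hδ]))
    (ht ▸ neg_mem (mem_roots_of_mem_pos hγ))
  exact neg_notMem_pos hγ (ht ▸ this)

def PosLT (R : EuclideanRootSystem E) (u v : E) : Prop :=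
  ∃ l : List E, l ≠ [] ∧ (∀ γ ∈ l, γ ∈ R.pos) ∧ v = u + l.sum

instance : IsStrictOrder E R.PosLT where
  irrefl u := by
    rintro ⟨l, hne, hl, h⟩
    exact list_sum_ne_zero hl hne (by simpa using h.symm)
  trans u v w := by
    rintro ⟨l₁, hne, hl₁, rfl⟩ ⟨l₂, -, hl₂, rfl⟩
    refine ⟨l₁ ++ l₂, by simp [hne], fun γ hγ => ?_, by simp [add_assoc]⟩
    rcases List.mem_append.mp hγ with h | h
    exacts [hl₁ γ h, hl₂ γ h]

lemma wellFoundedOn_posLT (R : EuclideanRootSystem E) : R.pos.WellFoundedOn R.PosLT :=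
  (R.finite.subset R.pos_subset).wellFoundedOn

def IsSimple (R : EuclideanRootSystem E) (α : E) : Prop :=
  α ∈ R.pos ∧ ∀ p ∈ R.pos, ∀ q ∈ R.pos, α ≠ p + q

lemma IsSimple.mem_pos (h : R.IsSimple α) : α ∈ R.pos := h.1

lemma IsSimple.mem_roots (h : R.IsSimple α) : α ∈ R.roots := mem_roots_of_mem_pos h.1

lemma exists_simple_decomposition (hβ : β ∈ R.pos) :
    ∃ d : List E, d ≠ [] ∧ (∀ γ ∈ d, R.IsSimple γ) ∧ d.sum = β := by
  refine R.wellFoundedOn_posLT.induction hβ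
    (P := fun β => ∃ d : List E, d ≠ [] ∧ (∀ γ ∈ d, R.IsSimple γ) ∧ d.sum = β) fun β hβ ih => ?_
  by_cases hs : R.IsSimple β
  · exact ⟨[β], by simp, by simpa using hs, by simp⟩
  obtain ⟨p, hp, q, hq, rfl⟩ : ∃ p ∈ R.pos, ∃ q ∈ R.pos, β = p + q := by
    simpa [IsSimple, hβ] using hs
  obtain ⟨dp, hdp, hdp', rfl⟩ := ih p hp ⟨[q], by simp, by simpa using hq, by simp⟩
  obtain ⟨dq, -, hdq', rfl⟩ := ih q hq ⟨[dp.sum], by simp, by simpa using hp, by simp [add_comm]⟩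
  refine ⟨dp ++ dq, by simp [hdp], fun γ hγ => ?_, by simp⟩
  rcases List.mem_append.mp hγ with h | h
  exacts [hdp' γ h, hdq' γ h]

lemma exists_isSimple_inner_pos (hβ : β ∈ R.pos) : ∃ γ, R.IsSimple γ ∧ 0 < ⟪β, γ⟫ := by
  obtain ⟨d, -, hd, hsum⟩ := exists_simple_decomposition hβ
  have hpos : 0 < ⟪d.sum, β⟫ := by
    rw [hsum]; exact real_inner_self_pos.mpr (ne_zero_of_mem (mem_roots_of_mem_pos hβ))
  obtain ⟨γ, hγ, hγβ⟩ := exists_mem_inner_pos_of_inner_sum_pos hpos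
  exact ⟨γ, hd γ hγ, by rwa [real_inner_comm]⟩

lemma list_sum_replicate_toNat {c : ℤ} (hc : 0 ≤ c) (α : E) :
    (List.replicate c.toNat α).sum = (c : ℝ) • α := by
  rw [List.sum_replicate, ← Nat.cast_smul_eq_nsmul ℝ]
  congr 1
  exact_mod_cast Int.toNat_of_nonneg hc

lemma rootReflection_mem_pos_of_pairing_nonpos (hα : α ∈ R.pos) (hβ : β ∈ R.pos)
    {c : ℤ} (hc : pairing β α = c) (hc0 : c ≤ 0) : rootReflection α β ∈ R.pos := by
  have hsum : (β :: List.replicate (-c).toNat α).sum = rootReflection α β := by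
    rw [List.sum_cons, list_sum_replicate_toNat (by omega), rootReflection_apply, hc]
    push_cast
    module
  rw [← hsum]
  refine list_sum_mem_pos _ (fun γ hγ => ?_) (hsum ▸ rootReflection_mem
    (mem_roots_of_mem_pos hα) (mem_roots_of_mem_pos hβ))
  rcases List.mem_cons.mp hγ with rfl | h
  exacts [hβ, List.eq_of_mem_replicate h ▸ hα]

lemma rootReflection_mem_pos_of_isSimple (hα : R.IsSimple α) (hβ : β ∈ R.pos) (hne : β ≠ α) :
    rootReflection α β ∈ R.pos := by
  -- if `⟨β, α^∨⟩ > 0`, then `β - α` is a smaller positive root and `s_α (β - α) = s_α β + α`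
  refine R.wellFoundedOn_posLT.induction hβ
    (P := fun β => β ≠ α → rootReflection α β ∈ R.pos) (fun β hβ ih hne => ?_) hne
  have hαΦ := hα.mem_roots
  have hβΦ := mem_roots_of_mem_pos hβ
  obtain ⟨c, hc⟩ := exists_pairing_eq_int hαΦ hβΦ
  rcases le_or_gt c 0 with hc0 | hc0
  · exact rootReflection_mem_pos_of_pairing_nonpos hα.mem_pos hβ hc hc0
  have hinner : 0 < ⟪β, α⟫ :=
    (pairing_pos_iff (ne_zero_of_mem hαΦ)).mp (by rw [hc]; exact_mod_cast hc0)
  have hsub : β - α ∈ R.roots := sub_mem_of_inner_pos hαΦ hβΦ hinner hne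
  have hsub_pos : β - α ∈ R.pos := by
    by_contra h
    exact hα.2 β hβ _ (neg_mem_pos_of_notMem_pos hsub h) (by abel)
  have hsub_ne : β - α ≠ α := by
    intro h
    rw [sub_eq_iff_eq_add, ← two_smul ℝ] at h
    have := R.reduced α hαΦ 2 (h ▸ hβΦ)
    norm_num at this
  have hrefl := ih (β - α) hsub_pos ⟨[α], by simp, by simpa using hα.mem_pos, by simp⟩ hsub_ne
  rw [map_sub, rootReflection_self (ne_zero_of_mem hαΦ), sub_neg_eq_add] at hrefl
  by_contra h
  exact hα.2 _ hrefl _ (neg_mem_pos_of_notMem_pos (rootReflection_mem hαΦ hβΦ) h) (by abel)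

section Words

variable {l : List E}

lemma act_mem (hl : ∀ γ ∈ l, γ ∈ R.roots) (hβ : β ∈ R.roots) : act l β ∈ R.roots := by
  induction l with
  | nil => simpa using hβ
  | cons γ l ih =>
    simp only [List.forall_mem_cons] at hl
    simpa using rootReflection_mem hl.1 (ih hl.2)

lemma inner_act (hl : ∀ γ ∈ l, γ ∈ R.roots) (u v : E) : ⟪act l u, act l v⟫ = ⟪u, v⟫ := by
  induction l with
  | nil => simp
  | cons γ l ih =>
    simp only [List.forall_mem_cons] at hl
    simp [inner_rootReflection (ne_zero_of_mem hl.1), ih hl.2]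

lemma pairing_act (hl : ∀ γ ∈ l, γ ∈ R.roots) (u v : E) :
    pairing (act l u) (act l v) = pairing u v := by
  simp only [pairing, inner_act hl]

lemma act_reverse_act (hl : ∀ γ ∈ l, γ ∈ R.roots) (v : E) : act l.reverse (act l v) = v := by
  induction l generalizing v with
  | nil => simp
  | cons γ l ih =>
    simp only [List.forall_mem_cons] at hl
    simp [act_append, rootReflection_rootReflection (ne_zero_of_mem hl.1), ih hl.2]

lemma forall_mem_reverse_roots (hl : ∀ γ ∈ l, γ ∈ R.roots) : ∀ γ ∈ l.reverse, γ ∈ R.roots :=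
  fun γ hγ => hl γ (List.mem_reverse.mp hγ)

lemma act_act_reverse (hl : ∀ γ ∈ l, γ ∈ R.roots) (v : E) : act l (act l.reverse v) = v := by
  simpa using act_reverse_act (forall_mem_reverse_roots hl) v

lemma pairing_act_left (hl : ∀ γ ∈ l, γ ∈ R.roots) (u v : E) :
    pairing (act l u) v = pairing u (act l.reverse v) := by
  conv_lhs => rw [← act_act_reverse hl v]
  exact pairing_act hl u _

lemma rootReflection_act (hl : ∀ γ ∈ l, γ ∈ R.roots) (α v : E) :
    rootReflection (act l α) (act l v) = act l (rootReflection α v) := by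
  simp only [rootReflection_apply, pairing_act hl, map_sub, map_smul]

end Words

lemma posLT_rootReflection_of_inner_pos (hα : α ∈ R.pos) (hβ : β ∈ R.roots)
    (hinner : 0 < ⟪β, α⟫) : R.PosLT (rootReflection α β) β := by
  have hαΦ := mem_roots_of_mem_pos hα
  obtain ⟨c, hc⟩ := exists_pairing_eq_int hαΦ hβ
  have hc0 : 0 < c := by
    have := (pairing_pos_iff (ne_zero_of_mem hαΦ)).mpr hinner
    rw [hc] at this; exact_mod_cast this
  refine ⟨List.replicate c.toNat α, by simp; omega, fun γ hγ => List.eq_of_mem_replicate hγ ▸ hα,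
    ?_⟩
  rw [list_sum_replicate_toNat hc0.le, rootReflection_apply, hc]
  abel

lemma exists_simple_word_eq_rootReflection (hβ : β ∈ R.roots) :
    ∃ d : List E, (∀ γ ∈ d, R.IsSimple γ) ∧ act d = rootReflection β := by
  wlog hβp : β ∈ R.pos generalizing β
  · obtain ⟨d, hd, h⟩ := this (neg_mem hβ) (neg_mem_pos_of_notMem_pos hβ hβp)
    exact ⟨d, hd, by rw [h, rootReflection_neg]⟩
  refine R.wellFoundedOn_posLT.induction hβp
    (P := fun β => ∃ d : List E, (∀ γ ∈ d, R.IsSimple γ) ∧ act d = rootReflection β)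
    (fun β hβp ih => ?_)
  by_cases hs : R.IsSimple β
  · exact ⟨[β], by simpa using hs, act_singleton β⟩
  obtain ⟨γ, hγ, hinner⟩ := exists_isSimple_inner_pos hβp
  have hγ0 := ne_zero_of_mem hγ.mem_roots
  have hβγ : β ≠ γ := fun h => hs (h ▸ hγ)
  obtain ⟨d, hd, hdβ⟩ := ih _ (rootReflection_mem_pos_of_isSimple hγ hβp hβγ)
    (posLT_rootReflection_of_inner_pos hγ.mem_pos (mem_roots_of_mem_pos hβp) hinner)
  refine ⟨γ :: (d ++ [γ]), fun δ hδ => ?_, LinearMap.ext fun v => ?_⟩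
  · simp only [List.mem_cons, List.mem_append, List.mem_nil_iff, or_false] at hδ
    rcases hδ with rfl | hδ | rfl
    exacts [hγ, hd δ hδ, hγ]
  · have hconj := rootReflection_act (R := R) (l := [γ]) (by simpa using hγ.mem_roots)
      (rootReflection γ β) (rootReflection γ v)
    simp only [act_singleton, rootReflection_rootReflection hγ0] at hconj
    simp [act_append, hdβ, hconj]

lemma exists_simple_word (hl : ∀ γ ∈ l, γ ∈ R.roots) :
    ∃ d : List E, (∀ γ ∈ d, R.IsSimple γ) ∧ act d = act l := by
  induction l with
  | nil => exact ⟨[], by simp, rfl⟩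
  | cons β l ih =>
    simp only [List.forall_mem_cons] at hl
    obtain ⟨d, hd, hdl⟩ := ih hl.2
    obtain ⟨d', hd', h⟩ := exists_simple_word_eq_rootReflection hl.1
    refine ⟨d' ++ d, fun γ hγ => ?_, by simp [act_append, h, hdl]⟩
    rcases List.mem_append.mp hγ with h | h
    exacts [hd' γ h, hd γ h]

lemma exists_word_eq_act_mul_rootReflection {l : List E} (hl : ∀ γ ∈ l, R.IsSimple γ)
    (hα : R.IsSimple α) (h : act l α ∉ R.pos) :
    ∃ l' : List E, (∀ γ ∈ l', R.IsSimple γ) ∧ l'.length + 1 = l.length ∧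
      act l' = act l * rootReflection α := by
  induction l with
  | nil => exact absurd hα.mem_pos (by simpa using h)
  | cons β t ih =>
    simp only [List.forall_mem_cons] at hl
    by_cases ht : act t α ∈ R.pos
    · have hβ : act t α = β := by
        by_contra hne
        exact h (by simpa using rootReflection_mem_pos_of_isSimple hl.1 ht hne)
      refine ⟨t, hl.2, rfl, LinearMap.ext fun v => ?_⟩
      have hconj := rootReflection_act (fun γ hγ => (hl.2 γ hγ).mem_roots) α
        (rootReflection α v)
      rw [hβ, rootReflection_rootReflection (ne_zero_of_mem hα.mem_roots)] at hconj
      simp [hconj]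
    · obtain ⟨t', ht', hlen, heq⟩ := ih hl.2 ht
      refine ⟨β :: t', ?_, by simp [hlen], by simp [heq, mul_assoc]⟩
      simpa using ⟨hl.1, ht'⟩

def IsDominant (R : EuclideanRootSystem E) (x : E) : Prop := ∀ β ∈ R.pos, 0 ≤ pairing x β

theorem eq_of_simple_act_eq_of_isDominant {x y : E} (l : List E) (hl : ∀ γ ∈ l, R.IsSimple γ)
    (hx : R.IsDominant x) (hy : R.IsDominant y) (h : act l x = y) : x = y := by
  -- Write `l = l₀ α`. If `l α < 0` then `⟨x, α^∨⟩ = 0`, so `s_α x = x` and `l₀` will do;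
  -- otherwise `l₀ α < 0` and the exchange lemma shortens `l`.
  rcases List.eq_nil_or_concat' l with rfl | ⟨l₀, α, rfl⟩
  · simpa using h
  have hl₀ : ∀ γ ∈ l₀, R.IsSimple γ := fun γ hγ => hl γ (by simp [hγ])
  have hα : R.IsSimple α := hl α (by simp)
  have hlΦ : ∀ γ ∈ l₀ ++ [α], γ ∈ R.roots := fun γ hγ => (hl γ hγ).mem_roots
  have hneg : act (l₀ ++ [α]) α = -act l₀ α := by
    simp [act_append, rootReflection_self (ne_zero_of_mem hα.mem_roots)]
  by_cases hpos : act (l₀ ++ [α]) α ∈ R.pos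
  · obtain ⟨l', hl', hlen, heq⟩ := exists_word_eq_act_mul_rootReflection hl₀ hα
      (fun h => neg_notMem_pos h (by rwa [← hneg]))
    exact eq_of_simple_act_eq_of_isDominant l' hl' hx hy (by rw [heq, ← h]; simp [act_append])
  · have hzero : pairing x α = 0 := by
      refine le_antisymm ?_ (hx α hα.mem_pos)
      have := hy _ (neg_mem_pos_of_notMem_pos (act_mem hlΦ hα.mem_roots) hpos)
      rw [← h, pairing_neg_right, pairing_act hlΦ] at this
      linarith
    refine eq_of_simple_act_eq_of_isDominant l₀ hl₀ hx hy ?_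
    simpa [act_append, rootReflection_apply, hzero] using h
termination_by l.length
decreasing_by all_goals subst_vars; simp; try omega

lemma finite_pos (R : EuclideanRootSystem E) : R.pos.Finite := R.finite.subset R.pos_subset

noncomputable def posRootSum (R : EuclideanRootSystem E) : E := ∑ β ∈ R.finite_pos.toFinset, β

lemma inner_posRootSum_of_isSimple (hα : R.IsSimple α) : ⟪R.posRootSum, α⟫ = ⟪α, α⟫ := by
  classical
  have hα0 := ne_zero_of_mem hα.mem_roots
  set T := R.finite_pos.toFinset.erase α
  have hmaps : ∀ β ∈ T, rootReflection α β ∈ T := by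
    intro β hβ
    obtain ⟨hβα, hβ⟩ := Finset.mem_erase.mp hβ
    rw [Set.Finite.mem_toFinset] at hβ
    refine Finset.mem_erase.mpr ⟨fun h => neg_notMem_pos hα.mem_pos ?_,
      (Set.Finite.mem_toFinset _).mpr (rootReflection_mem_pos_of_isSimple hα hβ hβα)⟩
    have : -α = β := by
      rw [← rootReflection_rootReflection hα0 β, h, rootReflection_self hα0]
    rwa [this]
  have hanti : ∀ β, ⟪rootReflection α β, α⟫ = -⟪β, α⟫ := fun β =>
    neg_eq_iff_eq_neg.mp (by simpa [rootReflection_self hα0] using inner_rootReflection hα0 β α)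
  have hT : ∑ β ∈ T, ⟪β, α⟫ = 0 := by
    have : ∑ β ∈ T, ⟪β, α⟫ = ∑ β ∈ T, ⟪rootReflection α β, α⟫ :=
      Finset.sum_nbij' (rootReflection α) (rootReflection α) hmaps hmaps
        (fun β _ => rootReflection_rootReflection hα0 β)
        (fun β _ => rootReflection_rootReflection hα0 β)
        (fun β _ => by rw [rootReflection_rootReflection hα0])
    simp only [hanti, Finset.sum_neg_distrib] at this
    linarith
  rw [posRootSum, ← Finset.add_sum_erase _ _ ((Set.Finite.mem_toFinset _).mpr hα.mem_pos),
    inner_add_left, sum_inner, hT, add_zero]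

lemma inner_posRootSum_pos (hβ : β ∈ R.pos) : 0 < ⟪R.posRootSum, β⟫ := by
  obtain ⟨d, hne, hd, rfl⟩ := exists_simple_decomposition hβ
  have hsum : ⟪R.posRootSum, d.sum⟫ = (d.map fun γ => ⟪γ, γ⟫).sum := by
    rw [← innerₛₗ_apply_apply, map_list_sum]
    congr 1
    exact List.map_congr_left fun γ hγ => by simp [inner_posRootSum_of_isSimple (hd γ hγ)]
  rw [hsum]
  refine List.sum_pos _ (fun x hx => ?_) (by simpa using hne)
  obtain ⟨γ, hγ, rfl⟩ := List.mem_map.mp hx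
  exact real_inner_self_pos.mpr (ne_zero_of_mem (hd γ hγ).mem_roots)

lemma eq_of_act_eq_of_isDominant {x y : E} {l : List E} (hl : ∀ γ ∈ l, γ ∈ R.roots)
    (hx : R.IsDominant x) (hy : R.IsDominant y) (h : act l x = y) : x = y := by
  obtain ⟨d, hd, hdl⟩ := exists_simple_word hl
  exact eq_of_simple_act_eq_of_isDominant d hd hx hy (by rw [hdl, h])

variable {m : E → ℕ}

/-- `Φ^m = {m(α)α}` is again a crystallographic root system with the same reflections. -/
structure IsCrystallographicScaling (R : EuclideanRootSystem E) (m : E → ℕ) : Prop where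
  pos : ∀ α ∈ R.roots, 0 < m α
  map_rootReflection : ∀ α ∈ R.roots, ∀ β ∈ R.roots, m (β - pairing β α • α) = m β
  pairing_mem_zmultiples :
    ∀ α ∈ R.roots, ∀ β ∈ R.roots, ∃ z : ℤ, (m β : ℝ) * pairing β α = m α * z

namespace IsCrystallographicScaling

lemma m_rootReflection (hm : R.IsCrystallographicScaling m) (hα : α ∈ R.roots)
    (hβ : β ∈ R.roots) : m (rootReflection α β) = m β :=
  hm.map_rootReflection α hα β hβ

lemma m_neg (hm : R.IsCrystallographicScaling m) (hα : α ∈ R.roots) : m (-α) = m α := by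
  simpa [rootReflection_self (ne_zero_of_mem hα)] using hm.m_rootReflection hα hα

lemma m_act (hm : R.IsCrystallographicScaling m) {l : List E} (hl : ∀ γ ∈ l, γ ∈ R.roots)
    (hβ : β ∈ R.roots) : m (act l β) = m β := by
  induction l with
  | nil => rfl
  | cons γ l ih =>
    simp only [List.forall_mem_cons] at hl
    simpa [hm.m_rootReflection hl.1 (act_mem hl.2 hβ)] using ih hl.2

lemma m_pos (hm : R.IsCrystallographicScaling m) (hα : α ∈ R.roots) : (0 : ℝ) < m α := by
  exact_mod_cast hm.pos α hα

end IsCrystallographicScaling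

/-- The lattice `Q^m`: a submonoid closure suffices, as the generators are closed under
negation (`neg_mem_scaledRootLattice`). -/
def scaledRootLattice (R : EuclideanRootSystem E) (m : E → ℕ) : AddSubmonoid E :=
  AddSubmonoid.closure ((fun β => (m β : ℝ) • β) '' R.roots)

lemma smul_mem_scaledRootLattice (hβ : β ∈ R.roots) :
    (m β : ℝ) • β ∈ R.scaledRootLattice m :=
  AddSubmonoid.subset_closure ⟨β, hβ, rfl⟩

lemma neg_mem_scaledRootLattice (hm : R.IsCrystallographicScaling m) {ν : E}
    (hν : ν ∈ R.scaledRootLattice m) : -ν ∈ R.scaledRootLattice m := by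
  induction hν using AddSubmonoid.closure_induction with
  | mem _ h =>
    obtain ⟨β, hβ, rfl⟩ := h
    simpa [hm.m_neg hβ] using smul_mem_scaledRootLattice (m := m) (neg_mem hβ)
  | zero => simp
  | add _ _ _ _ h₁ h₂ => simpa [add_comm] using add_mem h₁ h₂

lemma act_mem_scaledRootLattice (hm : R.IsCrystallographicScaling m) {l : List E}
    (hl : ∀ γ ∈ l, γ ∈ R.roots) {ν : E} (hν : ν ∈ R.scaledRootLattice m) :
    act l ν ∈ R.scaledRootLattice m := by
  induction hν using AddSubmonoid.closure_induction with
  | mem _ h =>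
    obtain ⟨β, hβ, rfl⟩ := h
    simpa [hm.m_act hl hβ] using smul_mem_scaledRootLattice (m := m) (act_mem hl hβ)
  | zero => simp
  | add _ _ _ _ h₁ h₂ => simpa using add_mem h₁ h₂

lemma exists_pairing_eq_mul_of_mem_scaledRootLattice (hm : R.IsCrystallographicScaling m)
    (hβ : β ∈ R.roots) {ν : E} (hν : ν ∈ R.scaledRootLattice m) :
    ∃ z : ℤ, pairing ν β = m β * z := by
  induction hν using AddSubmonoid.closure_induction with
  | mem _ h =>
    obtain ⟨γ, hγ, rfl⟩ := h
    simpa [pairing_smul] using hm.pairing_mem_zmultiples β hβ γ hγ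
  | zero => exact ⟨0, by simp [pairing]⟩
  | add _ _ _ _ h₁ h₂ =>
    obtain ⟨z₁, h₁⟩ := h₁
    obtain ⟨z₂, h₂⟩ := h₂
    exact ⟨z₁ + z₂, by rw [pairing_add, h₁, h₂]; push_cast; ring⟩

def BoundedBy (R : EuclideanRootSystem E) (m : E → ℕ) (x : E) : Prop :=
  ∀ β ∈ R.roots, |pairing x β| ≤ m β

lemma BoundedBy.act (hm : R.IsCrystallographicScaling m) {l : List E}
    (hl : ∀ γ ∈ l, γ ∈ R.roots) {x : E} (hx : R.BoundedBy m x) : R.BoundedBy m (act l x) := by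
  intro β hβ
  have hl' := forall_mem_reverse_roots hl
  rw [pairing_act_left hl, ← hm.m_act hl' hβ]
  exact hx _ (act_mem hl' hβ)

lemma BoundedBy.rootReflection (hm : R.IsCrystallographicScaling m) (hα : α ∈ R.roots)
    {x : E} (hx : R.BoundedBy m x) : R.BoundedBy m (rootReflection α x) := by
  simpa using hx.act hm (l := [α]) (by simpa using hα)

theorem list_sum_eq_zero_of_boundedBy (hm : R.IsCrystallographicScaling m) (t : List E)
    (ht : ∀ μ ∈ t, μ ∈ (fun β => (m β : ℝ) • β) '' R.roots) (hb : R.BoundedBy m t.sum) :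
    t.sum = 0 := by
  by_contra hne
  obtain ⟨μ, hμt, hμ⟩ := exists_mem_inner_pos_of_inner_sum_pos (real_inner_self_pos.mpr hne)
  obtain ⟨γ, hγ, rfl⟩ := ht μ hμt
  have hmγ := hm.m_pos hγ
  have hγ0 := ne_zero_of_mem hγ
  have hpos : 0 < pairing t.sum γ := by
    rw [real_inner_smul_left] at hμ
    rw [pairing_pos_iff hγ0, real_inner_comm]
    exact pos_of_mul_pos_right hμ hmγ.le
  have hmem : t.sum ∈ R.scaledRootLattice m :=
    list_sum_mem fun μ hμ => AddSubmonoid.subset_closure (ht μ hμ)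
  obtain ⟨z, hz⟩ := exists_pairing_eq_mul_of_mem_scaledRootLattice hm hγ hmem
  have hz1 : z = 1 := by
    have h1 : (0 : ℤ) < z := by exact_mod_cast pos_of_mul_pos_right (hz ▸ hpos) hmγ.le
    have h2 := hb γ hγ
    rw [hz, abs_of_pos (hz ▸ hpos)] at h2
    have h3 : z ≤ 1 := by exact_mod_cast (by nlinarith : (z : ℝ) ≤ 1)
    omega
  -- dropping the summand `m(γ)γ` is the reflection `s_γ`, since `⟨ν, γ^∨⟩ = m(γ)`
  obtain ⟨s, r, rfl⟩ := List.append_of_mem hμt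
  have hrest : (s ++ r).sum = rootReflection γ (s ++ (m γ : ℝ) • γ :: r).sum := by
    rw [rootReflection_apply, hz, hz1, Int.cast_one, mul_one]; simp; abel
  have hzero := list_sum_eq_zero_of_boundedBy hm (s ++ r)
    (fun μ hμ => ht μ (by simp at hμ ⊢; tauto)) (hrest ▸ hb.rootReflection hm hγ)
  rw [hzero, eq_comm, rootReflection_apply, hz, hz1, Int.cast_one, mul_one, sub_eq_zero] at hrest
  have := hz ▸ (congrArg (pairing · γ) hrest)
  simp only [pairing_smul, pairing_self hγ0, hz1, Int.cast_one] at this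
  linarith
termination_by t.length
decreasing_by subst_vars; simp

lemma eq_zero_of_mem_scaledRootLattice_of_boundedBy (hm : R.IsCrystallographicScaling m)
    {ν : E} (hν : ν ∈ R.scaledRootLattice m) (hb : R.BoundedBy m ν) : ν = 0 := by
  obtain ⟨t, ht, rfl⟩ := AddSubmonoid.exists_list_of_mem_closure hν
  exact list_sum_eq_zero_of_boundedBy hm t ht hb

def AffineStep (R : EuclideanRootSystem E) (m : E → ℕ) (u v : E) : Prop :=
  ∃ α ∈ R.roots, v = rootReflection α u ∨ v = u + (m α : ℝ) • α

def InAffineOrbit (R : EuclideanRootSystem E) (m : E → ℕ) (x y : E) : Prop :=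
  ∃ l : List E, (∀ γ ∈ l, γ ∈ R.roots) ∧ ∃ ν ∈ R.scaledRootLattice m, y = act l x + ν

namespace InAffineOrbit

lemma refl (x : E) : R.InAffineOrbit m x x := ⟨[], by simp, 0, zero_mem _, by simp⟩

lemma symm (hm : R.IsCrystallographicScaling m) {x y : E} (h : R.InAffineOrbit m x y) :
    R.InAffineOrbit m y x := by
  obtain ⟨l, hl, ν, hν, rfl⟩ := h
  have hl' := forall_mem_reverse_roots hl
  refine ⟨l.reverse, hl', -act l.reverse ν,
    neg_mem_scaledRootLattice hm (act_mem_scaledRootLattice hm hl' hν), ?_⟩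
  rw [map_add, act_reverse_act hl]
  abel

lemma trans (hm : R.IsCrystallographicScaling m) {x y z : E} (h₁ : R.InAffineOrbit m x y)
    (h₂ : R.InAffineOrbit m y z) : R.InAffineOrbit m x z := by
  obtain ⟨l₁, hl₁, ν₁, hν₁, rfl⟩ := h₁
  obtain ⟨l₂, hl₂, ν₂, hν₂, rfl⟩ := h₂
  refine ⟨l₂ ++ l₁, fun γ hγ => ?_, act l₂ ν₁ + ν₂,
    add_mem (act_mem_scaledRootLattice hm hl₂ hν₁) hν₂, by simp [act_append, add_assoc]⟩
  rcases List.mem_append.mp hγ with h | h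
  exacts [hl₂ γ h, hl₁ γ h]

lemma of_affineStep {x y : E} (h : R.AffineStep m x y) : R.InAffineOrbit m x y := by
  obtain ⟨α, hα, rfl | rfl⟩ := h
  · exact ⟨[α], by simpa using hα, 0, zero_mem _, by simp⟩
  · exact ⟨[], by simp, _, smul_mem_scaledRootLattice hα, by simp⟩

lemma of_eqvGen (hm : R.IsCrystallographicScaling m) {x y : E}
    (h : Relation.EqvGen (R.AffineStep m) x y) : R.InAffineOrbit m x y := by
  induction h with
  | rel _ _ h => exact of_affineStep h
  | refl x => exact refl x
  | symm _ _ _ ih => exact ih.symm hm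
  | trans _ _ _ _ _ ih₁ ih₂ => exact ih₁.trans hm ih₂

end InAffineOrbit

section Uniqueness

variable {l : List E} {x y ν : E}

lemma exists_pairing_eq_two_mul_of_not_boundedBy (hm : R.IsCrystallographicScaling m)
    (hl : ∀ γ ∈ l, γ ∈ R.roots) (hν : ν ∈ R.scaledRootLattice m) (hx : R.BoundedBy m x)
    (hy : R.BoundedBy m y) (h : y = act l x + ν) (hνb : ¬R.BoundedBy m ν) :
    ∃ β ∈ R.roots, pairing ν β = 2 * m β ∧ pairing y β = m β := by
  obtain ⟨β, hβ, hlt⟩ : ∃ β ∈ R.roots, (m β : ℝ) < pairing ν β := by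
    obtain ⟨β, hβ, hlt⟩ : ∃ β ∈ R.roots, (m β : ℝ) < |pairing ν β| := by
      simpa [BoundedBy] using hνb
    rcases le_or_gt 0 (pairing ν β) with h0 | h0
    · exact ⟨β, hβ, by rwa [abs_of_nonneg h0] at hlt⟩
    · refine ⟨-β, neg_mem hβ, ?_⟩
      rwa [hm.m_neg hβ, pairing_neg_right, ← abs_of_neg h0]
  have hmβ := hm.m_pos hβ
  obtain ⟨z, hz⟩ := exists_pairing_eq_mul_of_mem_scaledRootLattice hm hβ hν
  have hx' := abs_le.mp (hx.act hm hl β hβ)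
  have hy' := abs_le.mp (hy β hβ)
  have hpy : pairing y β = pairing (act l x) β + pairing ν β := by rw [h, pairing_add]
  have hz2 : z = 2 := by
    have h1 : (1 : ℤ) < z := by exact_mod_cast (by nlinarith : (1 : ℝ) < z)
    have h2 : z ≤ 2 := by exact_mod_cast (by nlinarith : (z : ℝ) ≤ 2)
    omega
  refine ⟨β, hβ, by rw [hz, hz2, Int.cast_ofNat, mul_comm], ?_⟩
  rw [hz, hz2, Int.cast_ofNat] at hpy
  linarith

lemma exists_affine_descent_step (hm : R.IsCrystallographicScaling m)
    (hl : ∀ γ ∈ l, γ ∈ R.roots) (hν : ν ∈ R.scaledRootLattice m) (hx : R.BoundedBy m x)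
    (hy : R.BoundedBy m y) (h : y = act l x + ν) (hνb : ¬R.BoundedBy m ν) :
    ∃ β ∈ R.roots, y = act (β :: l) x + (ν - (m β : ℝ) • β) ∧
      ‖ν - (m β : ℝ) • β‖ ^ 2 = ‖ν‖ ^ 2 - (m β : ℝ) ^ 2 * ⟪β, β⟫ := by
  obtain ⟨β, hβ, hνβ, hyβ⟩ := exists_pairing_eq_two_mul_of_not_boundedBy hm hl hν hx hy h hνb
  refine ⟨β, hβ, ?_, ?_⟩
  · have hrefl := congrArg (rootReflection β) h
    rw [map_add, rootReflection_apply β y, hyβ, rootReflection_apply β ν, hνβ] at hrefl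
    simp only [act_cons, Module.End.mul_apply]
    linear_combination (norm := module) hrefl
  · have hinner : 2 * ⟪ν, β⟫ = 2 * m β * ⟪β, β⟫ := by
      rw [← pairing_mul_inner_self, hνβ]
    rw [norm_sub_sq_real, real_inner_smul_right, norm_smul, mul_pow, Real.norm_natCast,
      ← real_inner_self_eq_norm_sq β]
    linear_combination (-(m β : ℝ)) * hinner

theorem exists_act_eq_of_inAffineOrbit (hm : R.IsCrystallographicScaling m)
    (hx : R.BoundedBy m x) (hy : R.BoundedBy m y) (h : R.InAffineOrbit m x y) :
    ∃ l : List E, (∀ γ ∈ l, γ ∈ R.roots) ∧ y = act l x := by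
  obtain ⟨δ, hδ, hδle⟩ := R.finite.exists_pos_forall_le (f := fun β => (m β : ℝ) ^ 2 * ⟪β, β⟫)
    fun β hβ => mul_pos (pow_pos (hm.m_pos hβ) 2) (real_inner_self_pos.mpr (ne_zero_of_mem hβ))
  obtain ⟨l, hl, ν, hν, hyx⟩ := h
  obtain ⟨⟨l', ν'⟩, ⟨hl', hν', hyx'⟩, hb, -⟩ := exists_reflTransGen_of_descent (r := fun _ _ => True)
    (p := fun s : List E × E => (∀ γ ∈ s.1, γ ∈ R.roots) ∧ s.2 ∈ R.scaledRootLattice m ∧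
      y = act s.1 x + s.2)
    (q := fun s => R.BoundedBy m s.2) (fun s => ‖s.2‖ ^ 2) (fun _ _ => by positivity) hδ
    (fun ⟨l, ν⟩ ⟨hl, hν, hyx⟩ hb => by
      obtain ⟨β, hβ, hyx', hnorm⟩ := exists_affine_descent_step hm hl hν hx hy hyx hb
      refine ⟨(β :: l, ν - (m β : ℝ) • β), ⟨?_, ?_, hyx'⟩, trivial, ?_⟩
      · simpa using ⟨hβ, hl⟩
      · simpa [sub_eq_add_neg] using
          add_mem hν (neg_mem_scaledRootLattice hm (smul_mem_scaledRootLattice hβ))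
      · simp only [hnorm]; linarith [hδle β hβ])
    (a := (l, ν)) ⟨hl, hν, hyx⟩
  exact ⟨l', hl', by rw [hyx', eq_zero_of_mem_scaledRootLattice_of_boundedBy hm hν' hb, add_zero]⟩

theorem eq_of_inAffineOrbit (hm : R.IsCrystallographicScaling m) (hx : R.IsDominant x)
    (hxb : R.BoundedBy m x) (hy : R.IsDominant y) (hyb : R.BoundedBy m y)
    (h : R.InAffineOrbit m x y) : x = y := by
  obtain ⟨l, hl, rfl⟩ := exists_act_eq_of_inAffineOrbit hm hxb hyb h
  exact eq_of_act_eq_of_isDominant hl hx hy rfl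

end Uniqueness

def IsWeight (R : EuclideanRootSystem E) (x : E) : Prop := ∀ α ∈ R.roots, ∃ k : ℤ, pairing x α = k

def InAlcove (R : EuclideanRootSystem E) (m : E → ℕ) (x : E) : Prop :=
  R.IsDominant x ∧ ∀ α ∈ R.pos, pairing x α ≤ m α

lemma InAlcove.boundedBy (hm : R.IsCrystallographicScaling m) {x : E} (hx : R.InAlcove m x) :
    R.BoundedBy m x := by
  intro α hα
  by_cases hp : α ∈ R.pos
  · exact abs_le.mpr ⟨by linarith [hx.1 α hp, (Nat.cast_nonneg (m α) : (0 : ℝ) ≤ m α)], hx.2 α hp⟩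
  · have hn := neg_mem_pos_of_notMem_pos hα hp
    have h₁ := hx.1 _ hn
    have h₂ := hx.2 _ hn
    rw [pairing_neg_right] at h₁ h₂
    rw [hm.m_neg hα] at h₂
    exact abs_le.mpr ⟨by linarith, by linarith [(Nat.cast_nonneg (m α) : (0 : ℝ) ≤ m α)]⟩

section Existence

variable {w c : E}

lemma IsWeight.rootReflection (hα : α ∈ R.roots) (hw : R.IsWeight w) :
    R.IsWeight (rootReflection α w) := fun β hβ => by
  rw [pairing_rootReflection_left (ne_zero_of_mem hα)]
  exact hw _ (rootReflection_mem hα hβ)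

lemma IsWeight.add_natCast_smul (hα : α ∈ R.roots) (hw : R.IsWeight w) (n : ℕ) :
    R.IsWeight (w + (n : ℝ) • α) := fun β hβ => by
  obtain ⟨k, hk⟩ := hw β hβ
  obtain ⟨j, hj⟩ := exists_pairing_eq_int hβ hα
  exact ⟨k + n * j, by rw [pairing_add, pairing_smul, hk, hj]; push_cast; ring⟩

lemma exists_pairing_mem_Ioo (hm : R.IsCrystallographicScaling m) :
    ∃ c : E, ∀ α ∈ R.pos, 0 < pairing c α ∧ pairing c α < m α := by
  have hρ : ∀ α ∈ R.pos, 0 < pairing R.posRootSum α := fun α hα =>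
    (pairing_pos_iff (ne_zero_of_mem (mem_roots_of_mem_pos hα))).mpr (inner_posRootSum_pos hα)
  obtain ⟨ε, hε, hεle⟩ := R.finite_pos.exists_pos_forall_le
    (f := fun α => (m α : ℝ) / (2 * pairing R.posRootSum α))
    fun α hα => div_pos (hm.m_pos (mem_roots_of_mem_pos hα)) (by linarith [hρ α hα])
  refine ⟨ε • R.posRootSum, fun α hα => ⟨?_, ?_⟩⟩ <;> rw [pairing_smul]
  · exact mul_pos hε (hρ α hα)
  · have hle := (le_div_iff₀ (by linarith [hρ α hα])).mp (hεle α hα)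
    linarith [hm.m_pos (mem_roots_of_mem_pos hα)]

lemma norm_sub_smul_sub_sq (w c α : E) (r : ℝ) :
    ‖w - r • α - c‖ ^ 2 =
      ‖w - c‖ ^ 2 - r * (pairing w α - pairing c α) * ⟪α, α⟫ + r ^ 2 * ⟪α, α⟫ := by
  have h : 2 * ⟪w - c, α⟫ = (pairing w α - pairing c α) * ⟪α, α⟫ := by
    rw [← pairing_sub, pairing_mul_inner_self]
  rw [show w - r • α - c = (w - c) - r • α by abel, norm_sub_sq_real, real_inner_smul_right,
    norm_smul, mul_pow, Real.norm_eq_abs, sq_abs, ← real_inner_self_eq_norm_sq α]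
  linear_combination (-r) * h

lemma exists_alcove_descent_step
    (hc : ∀ α ∈ R.pos, 0 < pairing c α ∧ pairing c α < m α) {δ : ℝ}
    (hδ : ∀ α ∈ R.pos, δ ≤ ⟪α, α⟫ * pairing c α ∧ δ ≤ ⟪α, α⟫ * (m α - pairing c α))
    (hw : R.IsWeight w) (hnot : ¬R.InAlcove m w) :
    ∃ w', R.IsWeight w' ∧ Relation.EqvGen (R.AffineStep m) w w' ∧
      ‖w' - c‖ ^ 2 ≤ ‖w - c‖ ^ 2 - δ := by
  obtain ⟨α, hα, hout⟩ : ∃ α ∈ R.pos, pairing w α < 0 ∨ m α < pairing w α := by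
    simp only [InAlcove, IsDominant, not_and_or, not_forall, not_le] at hnot
    rcases hnot with ⟨α, hα, h⟩ | ⟨α, hα, h⟩
    exacts [⟨α, hα, .inl h⟩, ⟨α, hα, .inr h⟩]
  have hαΦ := mem_roots_of_mem_pos hα
  have hA := real_inner_self_pos.mpr (ne_zero_of_mem hαΦ)
  obtain ⟨hc₀, hc₁⟩ := hc α hα
  obtain ⟨hδ₀, hδ₁⟩ := hδ α hα
  obtain ⟨k, hk⟩ := hw α hαΦ
  have hstep₁ : R.AffineStep m w (rootReflection α w) := ⟨α, hαΦ, .inl rfl⟩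
  rcases hout with hneg | hbig
  · have hk1 : (k : ℝ) ≤ -1 := by
      have : k < 0 := by exact_mod_cast hk ▸ hneg
      exact_mod_cast (show k ≤ -1 by omega)
    refine ⟨rootReflection α w, hw.rootReflection hαΦ, .rel _ _ hstep₁, ?_⟩
    rw [rootReflection_apply, norm_sub_smul_sub_sq, hk]
    nlinarith [mul_pos hc₀ hA]
  · have hk1 : (m α : ℝ) + 1 ≤ k := by
      have : (m α : ℤ) < k := by exact_mod_cast hk ▸ hbig
      exact_mod_cast (show (m α : ℤ) + 1 ≤ k by omega)
    have hstep₂ : R.AffineStep m (rootReflection α w) (rootReflection α w + (m α : ℝ) • α) :=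
      ⟨α, hαΦ, .inr rfl⟩
    refine ⟨_, (hw.rootReflection hαΦ).add_natCast_smul hαΦ (m α),
      .trans _ _ _ (.rel _ _ hstep₁) (.rel _ _ hstep₂), ?_⟩
    rw [show rootReflection α w + (m α : ℝ) • α = w - (pairing w α - m α) • α by
      rw [rootReflection_apply]; module, norm_sub_smul_sub_sq, hk]
    nlinarith [mul_pos (sub_pos.mpr hc₁) hA]

theorem exists_inAlcove_eqvGen (hm : R.IsCrystallographicScaling m) {z : E}
    (hz : R.IsWeight z) :
    ∃ μ, R.IsWeight μ ∧ R.InAlcove m μ ∧ Relation.EqvGen (R.AffineStep m) z μ := by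
  obtain ⟨c, hc⟩ := exists_pairing_mem_Ioo hm
  obtain ⟨δ, hδ, hδle⟩ := R.finite_pos.exists_pos_forall_le
    (f := fun α => min (⟪α, α⟫ * pairing c α) (⟪α, α⟫ * (m α - pairing c α)))
    fun α hα => by
      have hA := real_inner_self_pos.mpr (ne_zero_of_mem (mem_roots_of_mem_pos hα))
      exact lt_min (mul_pos hA (hc α hα).1) (mul_pos hA (sub_pos.mpr (hc α hα).2))
  obtain ⟨μ, hμ, hμA, hzμ⟩ := exists_reflTransGen_of_descent (r := Relation.EqvGen (R.AffineStep m))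
    (q := R.InAlcove m) (fun w => ‖w - c‖ ^ 2) (fun _ _ => by positivity) hδ
    (fun w hw hnot => exists_alcove_descent_step hc
      (fun α hα => le_min_iff.mp (hδle α hα)) hw hnot) hz
  rw [Relation.reflTransGen_eq_self] at hzμ
  exact ⟨μ, hμ, hμA, hzμ⟩

end Existence

end EuclideanRootSystem

open EuclideanRootSystem

theorem affine_Weyl_orbit_meets_alcove_general
    {E : Type*} [NormedAddCommGroup E] [InnerProductSpace ℝ E]
    (Φ : Set E) (hfin : Φ.Finite)
    (pair : E → E → ℝ) (hpair : ∀ lam a, pair lam a = 2 * ⟪lam, a⟫ / ⟪a, a⟫)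
    (hcrys : ∀ α ∈ Φ, ∀ β ∈ Φ, ∃ z : ℤ, pair β α = (z : ℝ))
    (hrefl : ∀ α ∈ Φ, ∀ β ∈ Φ, β - pair β α • α ∈ Φ)
    (hred : ∀ α ∈ Φ, ∀ c : ℝ, c • α ∈ Φ → c = 1 ∨ c = -1)
    (Φplus : Set E) (hsub : Φplus ⊆ Φ)
    (hpart : ∀ α ∈ Φ, (α ∈ Φplus ↔ ¬ (-α ∈ Φplus)))
    (hclosed : ∀ α ∈ Φplus, ∀ β ∈ Φplus, α + β ∈ Φ → α + β ∈ Φplus)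
    (m : E → ℕ) (hm : ∀ α ∈ Φ, 0 < m α)
    (hminv : ∀ α ∈ Φ, ∀ β ∈ Φ, m (β - pair β α • α) = m β)
    (hcrysm : ∀ α ∈ Φ, ∀ β ∈ Φ, ∃ z : ℤ, (m β : ℝ) * pair β α = (m α : ℝ) * (z : ℝ))
    -- the weight lattice, the lattice `P^m`, the dominant cone and the set `C`
    (P Pm Pplus C : Set E)
    (hP : P = {lam : E | ∀ α ∈ Φ, ∃ z : ℤ, pair lam α = (z : ℝ)})
    (hPm : Pm = {lam : E | ∀ α ∈ Φ, ∃ z : ℤ, pair lam α = (m α : ℝ) * (z : ℝ)})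
    (hPplus : Pplus = {lam ∈ P | ∀ α ∈ Φplus, 0 ≤ pair lam α})
    (hC : C = {lam ∈ P | ∀ α ∈ Φ, |pair lam α| ≤ (m α : ℝ)})
    -- the orbit equivalence relations of `W ⋉ Q^m` and of `W ⋉ P^m`
    (rel rel2 : E → E → Prop)
    (hrel : rel = fun u v =>
      ∃ α ∈ Φ, v = u - pair u α • α ∨ v = u + (m α : ℝ) • α)
    (hrel2 : rel2 = fun u v => rel u v ∨ ∃ ν ∈ Pm, v = u + ν) :
    ∀ lam ∈ P,
      (∃! mu : E, (mu ∈ C ∧ mu ∈ Pplus) ∧ Relation.EqvGen rel lam mu) ∧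
      (∃ mu : E, mu ∈ C ∧ Relation.EqvGen rel2 lam mu) := by
  obtain rfl : pair = pairing := funext₂ hpair
  subst hP hPm hPplus hC hrel2 hrel
  let R : EuclideanRootSystem E := ⟨Φ, Φplus, hfin, hcrys, hrefl, hred, hsub, hpart, hclosed⟩
  have hR : R.IsCrystallographicScaling m := ⟨hm, hminv, hcrysm⟩
  intro lam hlam
  obtain ⟨μ, hμ, hμA, hlamμ⟩ := exists_inAlcove_eqvGen hR hlam
  have hμC : R.IsWeight μ ∧ R.BoundedBy m μ := ⟨hμ, hμA.boundedBy hR⟩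
  refine ⟨⟨μ, ⟨⟨hμC, hμ, hμA.1⟩, hlamμ⟩, ?_⟩, μ, hμC, hlamμ.mono fun _ _ => Or.inl⟩
  rintro y ⟨⟨⟨-, hyb⟩, -, hyd⟩, hlamy⟩
  exact (eq_of_inAffineOrbit hR hμA.1 hμC.2 hyd hyb
    (.of_eqvGen hR (.trans _ _ _ (.symm _ _ hlamμ) hlamy))).symm

/-- Each orbit of the affine Weyl group `W ⋉ Q^m` on the weight lattice `P` meets
`C ∩ P^+` in exactly one point, where
`C = {λ ∈ P : |(λ,α^∨)| ≤ m(α) ∀ α ∈ Φ}`; in particular every `W ⋉ P^m`-orbit in `P`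
meets `C`.  The group `W ⋉ Q^m` is generated by the reflections `s_α` and the
translations by `m(α)α` (`α ∈ Φ`), so its orbits are those of the equivalence
relation generated by `u ↦ u - (u,α^∨)α` and `u ↦ u + m(α)α`; similarly for
`W ⋉ P^m`, adjoining translations by elements of `P^m`. -/
theorem affine_Weyl_orbit_meets_alcove
    {E : Type*} [NormedAddCommGroup E] [InnerProductSpace ℝ E]
    (Φ : Set E) (hfin : Φ.Finite) (h0 : (0 : E) ∉ Φ)
    (hneg : ∀ α ∈ Φ, -α ∈ Φ)
    (pair : E → E → ℝ) (hpair : ∀ lam a, pair lam a = 2 * ⟪lam, a⟫ / ⟪a, a⟫)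
    (hcrys : ∀ α ∈ Φ, ∀ β ∈ Φ, ∃ z : ℤ, pair β α = (z : ℝ))
    (hrefl : ∀ α ∈ Φ, ∀ β ∈ Φ, β - pair β α • α ∈ Φ)
    (hred : ∀ α ∈ Φ, ∀ c : ℝ, c • α ∈ Φ → c = 1 ∨ c = -1)
    (Φplus : Set E) (hsub : Φplus ⊆ Φ)
    (hpart : ∀ α ∈ Φ, (α ∈ Φplus ↔ ¬ (-α ∈ Φplus)))
    (hclosed : ∀ α ∈ Φplus, ∀ β ∈ Φplus, α + β ∈ Φ → α + β ∈ Φplus)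
    (m : E → ℕ) (hm : ∀ α ∈ Φ, 0 < m α)
    (hmneg : ∀ α ∈ Φ, m (-α) = m α)
    (hminv : ∀ α ∈ Φ, ∀ β ∈ Φ, m (β - pair β α • α) = m β)
    (hcrysm : ∀ α ∈ Φ, ∀ β ∈ Φ, ∃ z : ℤ, (m β : ℝ) * pair β α = (m α : ℝ) * (z : ℝ))
    -- the weight lattice, the lattice `P^m`, the dominant cone and the set `C`
    (P Pm Pplus C : Set E)
    (hP : P = {lam : E | ∀ α ∈ Φ, ∃ z : ℤ, pair lam α = (z : ℝ)})
    (hPm : Pm = {lam : E | ∀ α ∈ Φ, ∃ z : ℤ, pair lam α = (m α : ℝ) * (z : ℝ)})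
    (hPplus : Pplus = {lam ∈ P | ∀ α ∈ Φplus, 0 ≤ pair lam α})
    (hC : C = {lam ∈ P | ∀ α ∈ Φ, |pair lam α| ≤ (m α : ℝ)})
    -- the orbit equivalence relations of `W ⋉ Q^m` and of `W ⋉ P^m`
    (rel rel2 : E → E → Prop)
    (hrel : rel = fun u v =>
      ∃ α ∈ Φ, v = u - pair u α • α ∨ v = u + (m α : ℝ) • α)
    (hrel2 : rel2 = fun u v => rel u v ∨ ∃ ν ∈ Pm, v = u + ν) :
    ∀ lam ∈ P,
      (∃! mu : E, (mu ∈ C ∧ mu ∈ Pplus) ∧ Relation.EqvGen rel lam mu) ∧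
      (∃ mu : E, mu ∈ C ∧ Relation.EqvGen rel2 lam mu) :=
  affine_Weyl_orbit_meets_alcove_general Φ hfin pair hpair hcrys hrefl hred Φplus hsub hpart hclosed
    m hm hminv hcrysm P Pm Pplus C hP hPm hPplus hC rel rel2 hrel hrel2
end

section
/- For λ in the group algebra setting, the metaplectic divided difference operator ∇̄_i defined by ∇̄_i(x^λ) = ((1 - x^{-(q(λ),α_i^{m∨})α_i^m})/(1 - x^{α_i^m})) x^λ satisfies the identity x^λ ∇_i^m(x^ν) = ∇̄_i(x^{λ+ν}) - ∇̄_i(x^λ) x^{s_iν} for all λ ∈ P and ν ∈ P^m, where ∇_i^m(x^ν) = (x^ν - x^{s_iν})/(1 - x^{α_i^m}) is the ordinary divided difference operator on ℂ[P^m]. -/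
open AddMonoidAlgebra

/-!
Put `β = m • αi` and `χ ν = m c`. Then `s_i ν = ν - c • β`, and the exponent
`q(λ) = (χ λ - χ λ % m) / m = ⌊χ λ / m⌋` is additive along `ν`: `q(λ + ν) = q(λ) + c`.
With `A = x^{-q(λ) β}` and `C = x^{-c β}` the right-hand side is
`x^{λ+ν} ((1 - A C) - (1 - A) C) / (1 - x^β) = x^{λ+ν} (1 - C) / (1 - x^β)`, the left-hand side.
-/

theorem Int.sub_emod_ediv (a m : ℤ) : (a - a % m) / m = a / m := by
  rcases eq_or_ne m 0 with rfl | hm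
  · simp
  · rw [Int.emod_def, sub_sub_cancel, Int.mul_ediv_cancel_left _ hm]

theorem Int.add_mul_sub_emod_ediv {m : ℤ} (hm : m ≠ 0) (a c : ℤ) :
    (a + m * c - (a + m * c) % m) / m = (a - a % m) / m + c := by
  rw [Int.sub_emod_ediv, Int.sub_emod_ediv, Int.add_mul_ediv_left _ _ hm]

theorem AddMonoidAlgebra.algebraMap_single_one_add {R G S : Type*} [CommSemiring R]
    [AddCommMonoid G] [Semiring S] [Algebra R[G] S] (a b : G) :
    algebraMap R[G] S (single (a + b) 1) =
      algebraMap R[G] S (single a 1) * algebraMap R[G] S (single b 1) := by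
  rw [← map_mul, single_mul_single, one_mul]

/-- `L` models the weight lattice `P`, `χ = (·, α_i^∨)`, `s_i λ = λ - χ(λ) αi`,
`α_i^m = m • αi` and `(q(λ), α_i^{m∨}) = (χ λ - χ λ % m) / m`; the identity is stated in the
fraction field of `ℂ[L]`, where `X p` is the image of `x^p`. -/
theorem metaplectic_divided_difference_identity_general
    {L : Type*} [AddCommGroup L] [IsDomain (AddMonoidAlgebra ℂ L)]
    (χ : L →+ ℤ) (αi : L) (m : ℕ) (hm : 0 < m)
    (X : L → FractionRing (AddMonoidAlgebra ℂ L))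
    (hX : X = fun p => algebraMap (AddMonoidAlgebra ℂ L) _ (AddMonoidAlgebra.single p 1))
    (nabla : L → FractionRing (AddMonoidAlgebra ℂ L))
    (hnabla : nabla = fun p =>
      (1 - X ((-((χ p - χ p % (m : ℤ)) / (m : ℤ))) • (m • αi))) / (1 - X (m • αi)) * X p) :
    ∀ lam ν : L, (m : ℤ) ∣ χ ν →
      X lam * ((X ν - X (ν - χ ν • αi)) / (1 - X (m • αi)))
        = nabla (lam + ν) - nabla lam * X (ν - χ ν • αi) := by
  rintro lam ν ⟨c, hc⟩
  have hX_add (a b : L) : X (a + b) = X a * X b := by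
    subst hX
    exact algebraMap_single_one_add a b
  have hq : (χ (lam + ν) - χ (lam + ν) % m) / m = (χ lam - χ lam % m) / m + c := by
    rw [map_add, hc, Int.add_mul_sub_emod_ediv (by exact_mod_cast hm.ne')]
  have hsν : ν - χ ν • αi = ν + (-c) • (m • αi) := by
    rw [hc]
    module
  subst hnabla
  simp only [hq, hsν, neg_add, add_smul, hX_add]
  ring

/-- The metaplectic divided difference operator identity (Lemma 3.7(i)).

The weight lattice `P` is modelled by an additive group `L` equipped with the
coroot pairing `χ = (·, α_i^∨) : L →+ ℤ` and the simple root `αi` (so `χ αi = 2`,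
`s_i λ = λ - χ(λ)αi`, `α_i^m = m•αi`, and `(q(λ), α_i^{m∨}) = (χλ - χλ % m)/m`).
In the fraction field of the group algebra `ℂ[L]`, with `X p` the image of the
basis element `x^p`,
`x^λ ∇_i^m(x^ν) = ∇̄_i(x^{λ+ν}) - ∇̄_i(x^λ)x^{s_iν}`
for all `λ ∈ P` and `ν` with `m ∣ χ ν` (in particular for all `ν ∈ P^m`), where
`∇̄_i(x^λ) = ((1 - x^{-(q(λ),α_i^{m∨})α_i^m})/(1 - x^{α_i^m}))x^λ` and
`∇_i^m(x^ν) = (x^ν - x^{s_iν})/(1 - x^{α_i^m})`. -/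
theorem metaplectic_divided_difference_identity
    {L : Type*} [AddCommGroup L] [IsDomain (AddMonoidAlgebra ℂ L)]
    (χ : L →+ ℤ) (αi : L) (hαi : χ αi = 2) (m : ℕ) (hm : 0 < m)
    (X : L → FractionRing (AddMonoidAlgebra ℂ L))
    (hX : X = fun p => algebraMap (AddMonoidAlgebra ℂ L) _ (AddMonoidAlgebra.single p 1))
    (nabla : L → FractionRing (AddMonoidAlgebra ℂ L))
    (hnabla : nabla = fun p =>
      (1 - X ((-((χ p - χ p % (m : ℤ)) / (m : ℤ))) • (m • αi))) / (1 - X (m • αi)) * X p) :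
    ∀ lam ν : L, (m : ℤ) ∣ χ ν →
      X lam * ((X ν - X (ν - χ ν • αi)) / (1 - X (m • αi)))
        = nabla (lam + ν) - nabla lam * X (ν - χ ν • αi) :=
  metaplectic_divided_difference_identity_general χ αi m hm X hX nabla hnabla
end

section
/- In the group algebra of the semidirect product W ⋉ ℂ(P^m), the normalized intertwiner φ(s_i) := (k_i/c_i)T_i + 1 - k_i²/c_i, where c_i = (1 - k_i²x^{α_i^m})/(1 - x^{α_i^m}) and T_i := k_i + k_i^{-1}c_i(s_i - 1), satisfies the quadratic Hecke relation (T_i - k_i)(T_i + k_i^{-1}) = 0 and φ(s_i)² = 1 as operators, i.e. the Demazure–Lusztig element T_i = k_i + k_i^{-1}c_i(s_i - 1) in W ⋉ ℂ(P^m) satisfies the Hecke quadratic relation. -/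
/-!
Write `D f = s f - f`, so that `T = k + k⁻¹ c D`. Since `s` is an involution fixing `k`,
`s (T f) - T f = (k - k⁻¹ (c + s c)) D f`, and the `c`-function satisfies
`c + s c = 1 + k²`; hence `s ∘ T - T = -k⁻¹ D`, which is exactly the quadratic relation.
The normalized intertwiner is `s` itself, because `(k / c) T - (k² / c) = D`.
-/

section DemazureLusztig

variable {K : Type*} [Field K]

def demazureLusztig (s : K →+* K) (k c f : K) : K := k * f + k⁻¹ * c * (s f - f)

variable {s : K →+* K} {k c : K}

theorem add_map_eq_one_add_sq {X : K} (hX0 : X ≠ 0) (hX1 : X ≠ 1) (hsk : s k = k)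
    (hsX : s X = X⁻¹) (hc : c = (1 - k ^ 2 * X) / (1 - X)) : c + s c = 1 + k ^ 2 := by
  have h1X : (1 : K) - X ≠ 0 := sub_ne_zero.mpr hX1.symm
  have hX1' : X - 1 ≠ 0 := sub_ne_zero.mpr hX1
  subst hc
  simp only [map_div₀, map_sub, map_one, map_mul, map_pow, hsk, hsX]
  field_simp
  ring

theorem map_demazureLusztig_sub (hs : ∀ f, s (s f) = f) (hsk : s k = k)
    (hc : c + s c = 1 + k ^ 2) (hk : k ≠ 0) (f : K) :
    s (demazureLusztig s k c f) - demazureLusztig s k c f = -k⁻¹ * (s f - f) := by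
  have hsc : s c = 1 + k ^ 2 - c := eq_sub_of_add_eq' hc
  simp only [demazureLusztig, map_add, map_mul, map_sub, map_inv₀, hs, hsk, hsc]
  field_simp
  ring

theorem demazureLusztig_demazureLusztig (hs : ∀ f, s (s f) = f) (hsk : s k = k)
    (hc : c + s c = 1 + k ^ 2) (hk : k ≠ 0) (f : K) :
    demazureLusztig s k c (demazureLusztig s k c f) =
      (k - k⁻¹) * demazureLusztig s k c f + f := by
  have hsub := map_demazureLusztig_sub hs hsk hc hk f
  rw [demazureLusztig, hsub]
  simp only [demazureLusztig]
  field_simp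
  ring

theorem normalized_demazureLusztig_eq (hk : k ≠ 0) (hc : c ≠ 0) (f : K) :
    (k / c) * demazureLusztig s k c f + f - (k ^ 2 / c) * f = s f := by
  simp only [demazureLusztig]
  field_simp
  ring

end DemazureLusztig

/-- The Demazure–Lusztig element `T_i = k_i + k_i⁻¹ c_i (s_i - 1)` of
`W ⋉ ℂ(P^m)` satisfies the quadratic Hecke relation, and the normalized
intertwiner `φ(s_i) = (k_i/c_i)T_i + 1 - k_i²/c_i` squares to the identity.

The field `K` plays the role of `ℂ(P^m)`, the ring endomorphism `s` is the field
automorphism by which the simple reflection `s_i` acts (an involution fixing the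
constant `k`), `X` is the element `x^{α_i^m}` (so `s X = X⁻¹`), and
`c = (1 - k²X)/(1 - X)` is the `c`-function `c_i`.  Viewing `T_i` and `φ(s_i)`
as the operators `T f = k f + k⁻¹ c (s f - f)` and
`φ f = (k/c)(T f) + f - (k²/c) f` on `K`:
`(T_i - k_i)(T_i + k_i⁻¹) = 0` and `φ(s_i)² = 1`. -/
theorem demazure_lusztig_quadratic_relation
    {K : Type*} [Field K] (k : K) (hk : k ≠ 0)
    (s : K →+* K) (hs : ∀ f, s (s f) = f) (hsk : s k = k)
    (X : K) (hX0 : X ≠ 0) (hX1 : X ≠ 1) (hX2 : k ^ 2 * X ≠ 1)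
    (hsX : s X = X⁻¹)
    (c : K) (hc : c = (1 - k ^ 2 * X) / (1 - X))
    (T φ : K → K)
    (hT : T = fun f => k * f + k⁻¹ * c * (s f - f))
    (hφ : φ = fun f => (k / c) * T f + f - (k ^ 2 / c) * f) :
    (∀ f : K, T (T f) = (k - k⁻¹) * T f + f) ∧ (∀ f : K, φ (φ f) = f) := by
  have hcs : c + s c = 1 + k ^ 2 := add_map_eq_one_add_sq hX0 hX1 hsk hsX hc
  have hc0 : c ≠ 0 := hc ▸ div_ne_zero (sub_ne_zero.mpr hX2.symm) (sub_ne_zero.mpr hX1.symm)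
  have hT' : T = demazureLusztig s k c := hT
  have hφ' : φ = s := by
    subst hφ hT'
    exact funext (normalized_demazureLusztig_eq hk hc0)
  subst hT' hφ'
  exact ⟨demazureLusztig_demazureLusztig hs hsk hcs hk, hs⟩
end
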